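/- There exists a constant c such that every finite unit interval graph G satisfies χ(G)/3 ≤ χ₁(G) ≤ χ(G)/3 + c. -/

import Mathlib

open SimpleGraph

/-- A 1-selection on `G`: each vertex `v` selects (at most) one pair containing `v`;
deleting the selected pairs from the edge set removes at most one edge incident
to each vertex.  (Selecting a non-edge, e.g. the diagonal, deletes nothing at `v`.) -/
def IsOneSelection {V : Type*} (G : SimpleGraph V) (f : V → Sym2 V) : Prop :=
  ∀ v : V, v ∈ f v

/-- The 1-removed graph `G_f`. -/
def oneRemoved {V : Type*} (G : SimpleGraph V) (f : V → Sym2 V) : SimpleGraph V :=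
  G.deleteEdges (Set.range f)

/-- The chromatic number of `G` as a natural number. -/
noncomputable def chromNum {V : Type*} (G : SimpleGraph V) : ℕ :=
  sInf {n : ℕ | G.Colorable n}

/-- The robust chromatic number `χ₁(G)`: the minimum of `χ(G_f)` over all 1-selections. -/
noncomputable def robustChromNum {V : Type*} (G : SimpleGraph V) : ℕ :=
  sInf {m : ℕ | ∃ f : V → Sym2 V, IsOneSelection G f ∧ chromNum (oneRemoved G f) = m}

/-- The robust clique number `ω₁(G)`: the minimum of `ω(G_f)` over all 1-selections. -/
noncomputable def robustCliqueNum {V : Type*} (G : SimpleGraph V) : ℕ :=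
  sInf {m : ℕ | ∃ f : V → Sym2 V, IsOneSelection G f ∧ (oneRemoved G f).cliqueNum = m}

/-- A set of vertices is independent if no two of its elements are adjacent. -/
def IsIndepVxSet {V : Type*} (G : SimpleGraph V) (s : Set V) : Prop :=
  s.Pairwise fun a b => ¬ G.Adj a b

/-- The independence number of `G`. -/
noncomputable def indepNum {V : Type*} (G : SimpleGraph V) : ℕ :=
  sSup {n : ℕ | ∃ s : Finset V, IsIndepVxSet G ↑s ∧ s.card = n}

/-- The robust independence number `α₁(G)`: the maximum of `α(G_f)` over all 1-selections. -/
noncomputable def robustIndepNum {V : Type*} (G : SimpleGraph V) : ℕ :=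
  sSup {m : ℕ | ∃ f : V → Sym2 V, IsOneSelection G f ∧ _root_.indepNum (oneRemoved G f) = m}

/-- `U` is robust independent in `G` if some 1-selection makes it independent. -/
def IsRobustIndep {V : Type*} (G : SimpleGraph V) (U : Set V) : Prop :=
  ∃ f : V → Sym2 V, IsOneSelection G f ∧ IsIndepVxSet (oneRemoved G f) U

/-- Threshold graph. -/
def IsThresholdGraph {V : Type*} (G : SimpleGraph V) : Prop :=
  ∃ (h : ℝ) (g : V → ℝ), ∀ x y : V, x ≠ y → (G.Adj x y ↔ g x + g y > h)

/-- `G` is ω-unique: it has exactly one clique of order `ω(G)`. -/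
def IsOmegaUnique {V : Type*} (G : SimpleGraph V) : Prop :=
  ∃! s : Finset V, G.IsNClique G.cliqueNum s

/-- Split graph: vertex set partitions into a clique and an independent set. -/
def IsSplitGraph {V : Type*} (G : SimpleGraph V) : Prop :=
  ∃ A : Set V, G.IsClique A ∧ IsIndepVxSet G Aᶜ

/-- Chordal graph: no induced cycle of length greater than 3. -/
def IsChordalGraph {V : Type*} (G : SimpleGraph V) : Prop :=
  ∀ n : ℕ, 4 ≤ n → ¬ ∃ φ : Fin n ↪ V,
    ∀ i j : Fin n, G.Adj (φ i) (φ j) ↔ (SimpleGraph.cycleGraph n).Adj i j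

/-- Interval graph: vertices can be assigned nonempty closed real intervals so that
two distinct vertices are adjacent iff their intervals intersect. -/
def IsIntervalGraph {V : Type*} (G : SimpleGraph V) : Prop :=
  ∃ a b : V → ℝ, (∀ v, a v ≤ b v) ∧
    ∀ u v : V, u ≠ v →
      (G.Adj u v ↔ (Set.Icc (a u) (b u) ∩ Set.Icc (a v) (b v)).Nonempty)

/-- Unit interval graph: vertices can be labelled by reals so that two distinct
vertices are adjacent iff their labels are at distance less than 1. -/
def IsUnitIntervalGraph {V : Type*} (G : SimpleGraph V) : Prop :=
  ∃ r : V → ℝ, ∀ u v : V, u ≠ v → (G.Adj u v ↔ |r u - r v| < 1)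

/-- Quasi-unicyclic: every connected component contains at most one cycle,
i.e. any two cycles lying in the same component have the same edge set. -/
def QuasiUnicyclic {V : Type*} [DecidableEq V] (G : SimpleGraph V) : Prop :=
  ∀ (u v : V) (p : G.Walk u u) (q : G.Walk v v),
    p.IsCycle → q.IsCycle → G.Reachable u v →
      p.edges.toFinset = q.edges.toFinset

/-- The Kneser graph `KG(n,k)`. -/
def kneserGraph (n k : ℕ) : SimpleGraph {s : Finset (Fin n) // s.card = k} where
  Adj a b := a ≠ b ∧ Disjoint a.1 b.1
  symm := by
    constructor
    intro a b hab
    exact ⟨hab.1.symm, hab.2.symm⟩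
  loopless := by
    constructor
    intro a ha
    exact ha.1 rfl


/-!
The edges removed by a 1-selection are each selected by one of their ends, so on every vertex
set they are at most as many as the vertices; the removed graph is therefore 2-degenerate, hence
3-colourable, and pairing its colouring with one of `G_f` gives `χ(G) ≤ 3 χ(G_f)`.

For the upper bound, enumerate the vertices of a unit interval graph by increasing label. An edge
between positions `i < j` makes positions `i, …, j` a clique, so `j - i < χ(G)`. Cutting the
enumeration into consecutive triples and letting each vertex select the edge to the next vertex of
its triple, cyclically, destroys every edge inside a triple; colouring the `q`-th triple by
`q mod ⌈(χ(G) + 2) / 3⌉` is then proper.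
-/

open Finset

namespace SimpleGraph

variable {V : Type*} {G H : SimpleGraph V}

theorem Colorable.sup {m n : ℕ} (hG : G.Colorable m) (hH : H.Colorable n) :
    (G ⊔ H).Colorable (m * n) := by
  obtain ⟨c⟩ := hG
  obtain ⟨d⟩ := hH
  have hcard : Fintype.card (Fin m × Fin n) = m * n := by simp
  refine hcard ▸ (Coloring.mk (fun v => (c v, d v)) ?_).colorable
  rintro v w (hvw | hvw) hcd
  · exact c.valid hvw (Prod.ext_iff.1 hcd).1
  · exact d.valid hvw (Prod.ext_iff.1 hcd).2

theorem colorable_succ_of_forall_exists_card_adj_le [Fintype V] [DecidableRel G.Adj] {k : ℕ}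
    (h : ∀ s : Finset V, s.Nonempty → ∃ v ∈ s, #{w ∈ s | G.Adj v w} ≤ k) :
    G.Colorable (k + 1) := by
  classical
  suffices ∀ s : Finset V, ∃ c : V → Fin (k + 1), ∀ v ∈ s, ∀ w ∈ s, G.Adj v w → c v ≠ c w by
    obtain ⟨c, hc⟩ := this univ
    exact ⟨Coloring.mk c fun hvw => hc _ (mem_univ _) _ (mem_univ _) hvw⟩
  intro s
  induction s using Finset.strongInduction with
  | H s ih =>
    rcases s.eq_empty_or_nonempty with rfl | hs
    · exact ⟨0, by simp⟩
    obtain ⟨v, hv, hdeg⟩ := h s hs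
    obtain ⟨c, hc⟩ := ih (s.erase v) (erase_ssubset hv)
    obtain ⟨a, -, ha⟩ : ∃ a ∈ univ, a ∉ image c {w ∈ s | G.Adj v w} :=
      exists_mem_notMem_of_card_lt_card <| by
        simpa using card_image_le.trans_lt (Nat.lt_succ_of_le hdeg)
    have hfree : ∀ w ∈ s, G.Adj v w → c w ≠ a := fun w hw hvw hca =>
      ha (mem_image.2 ⟨w, mem_filter.2 ⟨hw, hvw⟩, hca⟩)
    refine ⟨Function.update c v a, fun x hx y hy hxy => ?_⟩
    have hyx : y ≠ x := (G.ne_of_adj hxy).symm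
    rcases eq_or_ne x v with rfl | hxv
    · simpa [hyx] using (hfree y hy hxy).symm
    rcases eq_or_ne y v with rfl | hyv
    · simpa [hxv] using hfree x hx hxy.symm
    simpa [hxv, hyv] using hc x (mem_erase.2 ⟨hxv, hx⟩) y (mem_erase.2 ⟨hyv, hy⟩) hxy

theorem sum_card_adj_le_two_mul [DecidableRel G.Adj] (f : V → Sym2 V)
    (hcover : ∀ v w, G.Adj v w → f v = s(v, w) ∨ f w = s(v, w)) (s : Finset V) :
    ∑ v ∈ s, #{w ∈ s | G.Adj v w} ≤ 2 * #s := by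
  classical
  have hsel : ∀ v, #{w ∈ s | f v = s(v, w)} ≤ 1 := fun v =>
    card_le_one.2 fun w hw w' hw' =>
      Sym2.congr_right.1 ((mem_filter.1 hw).2.symm.trans (mem_filter.1 hw').2)
  calc ∑ v ∈ s, #{w ∈ s | G.Adj v w}
      ≤ ∑ v ∈ s, (#{w ∈ s | f v = s(v, w)} + #{w ∈ s | f w = s(v, w)}) := by
        refine sum_le_sum fun v _ => (card_le_card fun w hw => ?_).trans (card_union_le _ _)
        simp only [mem_filter, mem_union] at hw ⊢
        exact (hcover v w hw.2).imp (⟨hw.1, ·⟩) (⟨hw.1, ·⟩)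
    _ = ∑ v ∈ s, #{w ∈ s | f v = s(v, w)} + ∑ w ∈ s, #{v ∈ s | f w = s(w, v)} := by
        simp only [sum_add_distrib, card_filter]
        rw [sum_comm (s := s)]
        simp only [Sym2.eq_swap]
    _ ≤ ∑ _v ∈ s, 1 + ∑ _w ∈ s, 1 := add_le_add (sum_le_sum fun v _ => hsel v)
        (sum_le_sum fun w _ => hsel w)
    _ = 2 * #s := by simp [two_mul]

theorem colorable_three_of_forall_adj_selected [Finite V] (f : V → Sym2 V)
    (hcover : ∀ v w, G.Adj v w → f v = s(v, w) ∨ f w = s(v, w)) : G.Colorable 3 := by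
  classical
  have := Fintype.ofFinite V
  refine colorable_succ_of_forall_exists_card_adj_le fun s hs => ?_
  by_contra! hdeg
  have hfew := sum_card_adj_le_two_mul f hcover s
  have hmany : ∑ _v ∈ s, 3 ≤ ∑ v ∈ s, #{w ∈ s | G.Adj v w} := sum_le_sum hdeg
  rw [sum_const, smul_eq_mul] at hmany
  have hpos := hs.card_pos
  omega

end SimpleGraph

section Selections

variable {V : Type*} {G : SimpleGraph V} {f : V → Sym2 V}

theorem chromNum_le_of_colorable {n : ℕ} (h : G.Colorable n) : chromNum G ≤ n :=
  Nat.sInf_le h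

theorem colorable_chromNum [Finite V] (G : SimpleGraph V) : G.Colorable (chromNum G) :=
  have := Fintype.ofFinite V
  Nat.sInf_mem (s := {n | G.Colorable n}) ⟨_, G.colorable_of_fintype⟩

theorem robustChromNum_le (hf : IsOneSelection G f) :
    robustChromNum G ≤ chromNum (oneRemoved G f) :=
  Nat.sInf_le ⟨f, hf, rfl⟩

theorem exists_isOneSelection_chromNum_eq_robustChromNum (G : SimpleGraph V) :
    ∃ f, IsOneSelection G f ∧ chromNum (oneRemoved G f) = robustChromNum G :=
  Nat.sInf_mem (s := {m | ∃ f, IsOneSelection G f ∧ chromNum (oneRemoved G f) = m})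
    ⟨_, fun v => s(v, v), fun v => Sym2.mem_mk_left v v, rfl⟩

theorem colorable_fromEdgeSet_range [Finite V] (hf : IsOneSelection G f) :
    (fromEdgeSet (Set.range f)).Colorable 3 := by
  refine colorable_three_of_forall_adj_selected f fun v w hvw => ?_
  obtain ⟨⟨x, hx⟩, -⟩ := hvw
  rcases Sym2.mem_iff.1 (hx ▸ hf x) with rfl | rfl
  exacts [.inl hx, .inr hx]

theorem chromNum_le_three_mul_chromNum_oneRemoved [Finite V] (hf : IsOneSelection G f) :
    chromNum G ≤ 3 * chromNum (oneRemoved G f) := by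
  have hle : G ≤ fromEdgeSet (Set.range f) ⊔ oneRemoved G f :=
    (deleteEdges_le_iff _ _).1 le_rfl
  exact chromNum_le_of_colorable <|
    ((colorable_fromEdgeSet_range hf).sup (colorable_chromNum _)).mono_left hle

theorem chromNum_le_three_mul_robustChromNum [Finite V] (G : SimpleGraph V) :
    chromNum G ≤ 3 * robustChromNum G := by
  obtain ⟨f, hf, hχ⟩ := exists_isOneSelection_chromNum_eq_robustChromNum G
  exact hχ ▸ chromNum_le_three_mul_chromNum_oneRemoved hf

end Selections

section TripleSelection

variable {V : Type*} {G : SimpleGraph V} {n : ℕ}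

/-- The successor of `i` in the cyclic order of its block `{3q, 3q + 1, 3q + 2} ∩ [0, n)`. -/
def tripleSucc (i : Fin n) : Fin n :=
  if h : (i : ℕ) % 3 = 2 ∨ (i : ℕ) + 1 = n then ⟨3 * (i / 3), by have := i.isLt; omega⟩
  else ⟨i + 1, by have := i.isLt; omega⟩

def tripleSelection (e : Fin n ≃ V) (v : V) : Sym2 V :=
  s(v, e (tripleSucc (e.symm v)))

theorem isOneSelection_tripleSelection (e : Fin n ≃ V) : IsOneSelection G (tripleSelection e) :=
  fun _ => Sym2.mem_mk_left _ _

theorem mk_mem_range_tripleSelection (e : Fin n ≃ V) {i j : Fin n} (hij : i < j)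
    (hblock : (i : ℕ) / 3 = j / 3) : s(e i, e j) ∈ Set.range (tripleSelection e) := by
  have hij' : (i : ℕ) < j := hij
  by_cases hnext : (j : ℕ) = i + 1
  · refine ⟨e i, ?_⟩
    have hsucc : tripleSucc i = j := by
      unfold tripleSucc
      rw [dif_neg (by omega)]
      exact Fin.ext hnext.symm
    simp [tripleSelection, hsucc]
  · refine ⟨e j, ?_⟩
    have hsucc : tripleSucc j = i := by
      unfold tripleSucc
      rw [dif_pos (by omega)]
      exact Fin.ext (by simp only; omega)
    simp [tripleSelection, hsucc, Sym2.eq_swap]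

theorem colorable_oneRemoved_tripleSelection (e : Fin n ≃ V) {b : ℕ}
    (hb : ∀ i j, i < j → G.Adj (e i) (e j) → (j : ℕ) < i + b) :
    (oneRemoved G (tripleSelection e)).Colorable ((b + 4) / 3) := by
  set k := (b + 4) / 3
  have hk : 0 < k := by omega
  have key : ∀ i j, i < j → (oneRemoved G (tripleSelection e)).Adj (e i) (e j) →
      ¬ (i : ℕ) / 3 ≡ j / 3 [MOD k] := by
    intro i j hij hadj hmod
    obtain ⟨hadjG, hkept⟩ := deleteEdges_adj.1 hadj
    rcases (Nat.div_le_div_right (c := 3) hij.le).eq_or_lt with hblock | hblock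
    · exact hkept (mk_mem_range_tripleSelection e hij hblock)
    · have hfar := hmod.add_le_of_lt hblock
      have hnear := hb i j hij hadjG
      omega
  refine ⟨Coloring.mk (fun v => ⟨(e.symm v : ℕ) / 3 % k, Nat.mod_lt _ hk⟩) fun {v w} hvw hc => ?_⟩
  obtain ⟨i, rfl⟩ := e.surjective v
  obtain ⟨j, rfl⟩ := e.surjective w
  simp only [Equiv.symm_apply_apply, Fin.mk.injEq] at hc
  rcases lt_or_gt_of_ne (fun hij : i = j => (oneRemoved G _).ne_of_adj hvw (hij ▸ rfl)) with hij | hij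
  exacts [key i j hij hvw hc, key j i hij hvw.symm hc.symm]

theorem robustChromNum_le_of_forall_adj_lt_add (e : Fin n ≃ V) {b : ℕ}
    (hb : ∀ i j, i < j → G.Adj (e i) (e j) → (j : ℕ) < i + b) :
    robustChromNum G ≤ (b + 4) / 3 :=
  (robustChromNum_le (isOneSelection_tripleSelection e)).trans
    (chromNum_le_of_colorable (colorable_oneRemoved_tripleSelection e hb))

end TripleSelection

section UnitInterval

variable {V : Type*} {G : SimpleGraph V}

theorem exists_equiv_fin_monotone_comp {α : Type*} [LinearOrder α] [Fintype V] (r : V → α) :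
    ∃ e : Fin (Fintype.card V) ≃ V, Monotone (r ∘ e) := by
  let e₀ := (Fintype.equivFin V).symm
  exact ⟨(Tuple.sort (r ∘ e₀)).trans e₀, Tuple.monotone_sort (r ∘ e₀)⟩

theorem isClique_image_Icc_of_adj {n : ℕ} {r : V → ℝ}
    (hr : ∀ u v, u ≠ v → (G.Adj u v ↔ |r u - r v| < 1)) {e : Fin n ≃ V} (he : Monotone (r ∘ e))
    {i j : Fin n} (hadj : G.Adj (e i) (e j)) :
    G.IsClique (e '' Set.Icc i j) := by
  have hclose := abs_lt.1 ((hr _ _ (G.ne_of_adj hadj)).1 hadj)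
  rintro _ ⟨k, ⟨hik, hkj⟩, rfl⟩ _ ⟨l, ⟨hil, hlj⟩, rfl⟩ hkl
  have h₁ : r (e i) ≤ r (e k) := he hik
  have h₂ : r (e k) ≤ r (e j) := he hkj
  have h₃ : r (e i) ≤ r (e l) := he hil
  have h₄ : r (e l) ≤ r (e j) := he hlj
  exact (hr _ _ hkl).2 (abs_lt.2 ⟨by linarith, by linarith⟩)

theorem lt_add_chromNum_of_adj [Finite V] {n : ℕ} {r : V → ℝ}
    (hr : ∀ u v, u ≠ v → (G.Adj u v ↔ |r u - r v| < 1)) {e : Fin n ≃ V} (he : Monotone (r ∘ e))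
    {i j : Fin n} (hij : i < j) (hadj : G.Adj (e i) (e j)) : (j : ℕ) < i + chromNum G := by
  have hclique : G.IsClique ((Finset.Icc i j).map e.toEmbedding : Set V) := by
    simpa using isClique_image_Icc_of_adj hr he hadj
  have hcard := hclique.card_le_of_colorable (colorable_chromNum G)
  simp only [Finset.card_map, Fin.card_Icc] at hcard
  omega

theorem robustChromNum_le_of_isUnitIntervalGraph [Finite V] (hG : IsUnitIntervalGraph G) :
    robustChromNum G ≤ (chromNum G + 4) / 3 := by
  have := Fintype.ofFinite V
  obtain ⟨r, hr⟩ := hG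
  obtain ⟨e, he⟩ := exists_equiv_fin_monotone_comp r
  exact robustChromNum_le_of_forall_adj_lt_add e fun i j hij => lt_add_chromNum_of_adj hr he hij

end UnitInterval

/-- There is a constant `c` such that every finite unit interval graph `G`
satisfies `χ(G)/3 ≤ χ₁(G) ≤ χ(G)/3 + c`. -/
theorem robustChromNum_unitIntervalGraph :
    ∃ c : ℝ, ∀ (V : Type) [Fintype V] (G : SimpleGraph V),
      IsUnitIntervalGraph G →
        (chromNum G : ℝ) / 3 ≤ (robustChromNum G : ℝ) ∧
          (robustChromNum G : ℝ) ≤ (chromNum G : ℝ) / 3 + c := by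
  refine ⟨4 / 3, fun V _ G hG => ⟨?_, ?_⟩⟩
  · have hχ : (chromNum G : ℝ) ≤ 3 * robustChromNum G := by
      exact_mod_cast chromNum_le_three_mul_robustChromNum G
    linarith
  · calc (robustChromNum G : ℝ) ≤ ((chromNum G + 4) / 3 : ℕ) := by
          exact_mod_cast robustChromNum_le_of_isUnitIntervalGraph hG
      _ ≤ ((chromNum G + 4 : ℕ) : ℝ) / 3 := Nat.cast_div_le
      _ = (chromNum G : ℝ) / 3 + 4 / 3 := by push_cast; ring
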